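/- Let V be a finite set of N nodes partitioned into two sensitive groups S₀ and S₁ of sizes N₀ ≥ 1 and N₁ ≥ 1, and let F : V → ℝ^d have group means ν⁽ˢ⁾ = (1/N_s)·Σ_{i∈S_s} F_i for s ∈ {0,1}. Suppose D ≥ 0 satisfies ‖F_i − ν⁽ˢ⁾‖ ≤ D for every node i in group S_s (s ∈ {0,1}). Let g : ℝ² → ℝ² and L > 0 satisfy 2·|g(x)₁ − g(y)₁| ≤ L·‖x − y‖ for all x, y ∈ ℝ², and let W ∈ ℝ^{d×2}. Then |(1/N₀)·Σ_{i∈S₀} g(WᵀF_i)₁ − (1/N₁)·Σ_{j∈S₁} g(WᵀF_j)₁| ≤ (L/2)·‖W‖_op·(‖ν⁽⁰⁾ − ν⁽¹⁾‖ + 2D). -/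

import Mathlib

/-! The readout `v ↦ g(Wᵀv)₁` is `(L/2)‖W‖_op`-Lipschitz. Hence the average of the readout over
a group is within `(L/2)‖W‖_op D` of its value at that group's centre `ν⁽ˢ⁾`, and the values at the
two centres differ by at most `(L/2)‖W‖_op ‖ν⁽⁰⁾ − ν⁽¹⁾‖`. -/

open Matrix Finset

/-- The sensitive group `S_b`, where group membership is given by `grp`
(`false` encodes `S₀` and `true` encodes `S₁`). -/
def sgrp {V : Type*} [Fintype V] (grp : V → Bool) (b : Bool) : Finset V :=
  Finset.univ.filter (fun i => grp i = b)

/-- `A` acting on a Euclidean vector `v`, i.e. the matrix-vector product `A v`. -/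
noncomputable def mulVecE {m n : ℕ} (A : Matrix (Fin m) (Fin n) ℝ)
    (v : EuclideanSpace ℝ (Fin n)) : EuclideanSpace ℝ (Fin m) :=
  WithLp.toLp 2 (fun i => ∑ j, A i j * v j)

/-- The operator norm of `W ∈ ℝ^{d×2}`, viewed (via `v ↦ Wᵀ v`) as a linear map
`ℝ^d → ℝ²` between Euclidean spaces. -/
noncomputable def opNorm {d : ℕ} (W : Matrix (Fin d) (Fin 2) ℝ) : ℝ :=
  ‖LinearMap.toContinuousLinearMap (Matrix.toEuclideanLin Wᵀ)‖

theorem abs_inv_card_mul_sum_sub_le {ι : Type*} {s : Finset ι} (hs : s.Nonempty)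
    {f : ι → ℝ} {a B : ℝ} (hf : ∀ i ∈ s, |f i - a| ≤ B) :
    |(#s : ℝ)⁻¹ * ∑ i ∈ s, f i - a| ≤ B := by
  have hcard : (0 : ℝ) < #s := by exact_mod_cast hs.card_pos
  have hlower : #s • (a - B) ≤ ∑ i ∈ s, f i :=
    s.card_nsmul_le_sum _ _ fun i hi => by linarith [(abs_sub_le_iff.mp (hf i hi)).2]
  have hupper : ∑ i ∈ s, f i ≤ #s • (a + B) :=
    s.sum_le_card_nsmul _ _ fun i hi => by linarith [(abs_sub_le_iff.mp (hf i hi)).1]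
  rw [nsmul_eq_mul] at hlower hupper
  rw [abs_sub_le_iff]
  constructor
  · rw [sub_le_iff_le_add, inv_mul_le_iff₀ hcard]
    linarith
  · rw [sub_le_comm, le_inv_mul_iff₀ hcard]
    linarith

theorem LipschitzWith.abs_inv_card_mul_sum_sub_le {E ι : Type*} [PseudoMetricSpace E]
    {K : NNReal} {φ : E → ℝ} (hφ : LipschitzWith K φ) {s : Finset ι} (hs : s.Nonempty)
    {x : ι → E} {c : E} {D : ℝ} (hx : ∀ i ∈ s, dist (x i) c ≤ D) :
    |(#s : ℝ)⁻¹ * ∑ i ∈ s, φ (x i) - φ c| ≤ K * D :=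
  _root_.abs_inv_card_mul_sum_sub_le hs fun i hi =>
    (hφ.dist_le_mul (x i) c).trans (mul_le_mul_of_nonneg_left (hx i hi) K.2)

theorem mem_sgrp {V : Type*} [Fintype V] {grp : V → Bool} {b : Bool} {i : V} :
    i ∈ sgrp grp b ↔ grp i = b := by
  simp [sgrp]

theorem mulVecE_eq_toEuclideanLin {m n : ℕ} (A : Matrix (Fin m) (Fin n) ℝ)
    (v : EuclideanSpace ℝ (Fin n)) : mulVecE A v = Matrix.toEuclideanLin A v := by
  ext i
  simp [mulVecE, Matrix.toEuclideanLin, Matrix.mulVec, dotProduct]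

theorem stmt8_general {V : Type*} [Fintype V] {d : ℕ}
    (grp : V → Bool) (N₀ N₁ : ℕ)
    (hcard0 : (sgrp grp false).card = N₀) (hcard1 : (sgrp grp true).card = N₁)
    (hN₀ : 1 ≤ N₀) (hN₁ : 1 ≤ N₁)
    (F : V → EuclideanSpace ℝ (Fin d))
    (ν : Bool → EuclideanSpace ℝ (Fin d))
    (D : ℝ)
    (hdev : ∀ i : V, ‖F i - ν (grp i)‖ ≤ D)
    (g : EuclideanSpace ℝ (Fin 2) → EuclideanSpace ℝ (Fin 2))
    (L : ℝ) (hL : 0 < L)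
    (hLip : ∀ x y : EuclideanSpace ℝ (Fin 2), 2 * |g x 1 - g y 1| ≤ L * ‖x - y‖)
    (W : Matrix (Fin d) (Fin 2) ℝ) :
    |(1 / (N₀ : ℝ)) * ∑ i ∈ sgrp grp false, g (mulVecE Wᵀ (F i)) 1
        - (1 / (N₁ : ℝ)) * ∑ j ∈ sgrp grp true, g (mulVecE Wᵀ (F j)) 1| ≤
      L / 2 * opNorm W * (‖ν false - ν true‖ + 2 * D) := by
  set T := LinearMap.toContinuousLinearMap (Matrix.toEuclideanLin Wᵀ)
  set K := (L / 2).toNNReal * ‖T‖₊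
  have hK : (K : ℝ) = L / 2 * opNorm W := by
    simp [K, opNorm, T, Real.coe_toNNReal _ (by positivity : 0 ≤ L / 2)]
  have hφ : LipschitzWith K fun v => g (T v) 1 := by
    refine (LipschitzWith.of_dist_le_mul (f := fun x : EuclideanSpace ℝ (Fin 2) => g x 1)
      fun x y => ?_).comp T.lipschitz
    rw [Real.dist_eq, dist_eq_norm, Real.coe_toNNReal _ (by positivity)]
    linarith [hLip x y]
  have hmean : ∀ b N, #(sgrp grp b) = N → 1 ≤ N →
      |1 / (N : ℝ) * ∑ i ∈ sgrp grp b, g (mulVecE Wᵀ (F i)) 1 - g (T (ν b)) 1|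
        ≤ L / 2 * opNorm W * D := by
    rintro b N rfl hN
    simp only [one_div, mulVecE_eq_toEuclideanLin, ← hK]
    exact hφ.abs_inv_card_mul_sum_sub_le (card_pos.mp hN) fun i hi => by
      simpa [dist_eq_norm, mem_sgrp.mp hi] using hdev i
  have hcenter :
      |g (T (ν false)) 1 - g (T (ν true)) 1| ≤ L / 2 * opNorm W * ‖ν false - ν true‖ := by
    simpa [hK, Real.dist_eq, dist_eq_norm] using hφ.dist_le_mul (ν false) (ν true)
  refine (dist_triangle4 _ (g (T (ν false)) 1) (g (T (ν true)) 1) _).trans ?_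
  rw [Real.dist_eq, Real.dist_eq, Real.dist_eq, abs_sub_comm (g (T (ν true)) 1)]
  linarith [hmean false N₀ hcard0 hN₀, hmean true N₁ hcard1 hN₁]

/-- If every node's representation is within distance `D` of its group mean `ν⁽ˢ⁾`, and
`2·|g(x)₁ − g(y)₁| ≤ L·‖x − y‖`, then the demographic-parity gap of `i ↦ g(WᵀF_i)₁` is at
most `(L/2)·‖W‖_op·(‖ν⁽⁰⁾ − ν⁽¹⁾‖ + 2D)`. -/
theorem stmt8 {V : Type*} [Fintype V] {d : ℕ}
    (grp : V → Bool) (N₀ N₁ : ℕ)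
    (hcard0 : (sgrp grp false).card = N₀) (hcard1 : (sgrp grp true).card = N₁)
    (hN₀ : 1 ≤ N₀) (hN₁ : 1 ≤ N₁)
    (F : V → EuclideanSpace ℝ (Fin d))
    (ν : Bool → EuclideanSpace ℝ (Fin d))
    (hν : ∀ b, ν b = (((sgrp grp b).card : ℝ))⁻¹ • ∑ i ∈ sgrp grp b, F i)
    (D : ℝ) (hD : 0 ≤ D)
    (hdev : ∀ i : V, ‖F i - ν (grp i)‖ ≤ D)
    (g : EuclideanSpace ℝ (Fin 2) → EuclideanSpace ℝ (Fin 2))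
    (L : ℝ) (hL : 0 < L)
    (hLip : ∀ x y : EuclideanSpace ℝ (Fin 2), 2 * |g x 1 - g y 1| ≤ L * ‖x - y‖)
    (W : Matrix (Fin d) (Fin 2) ℝ) :
    |(1 / (N₀ : ℝ)) * ∑ i ∈ sgrp grp false, g (mulVecE Wᵀ (F i)) 1
        - (1 / (N₁ : ℝ)) * ∑ j ∈ sgrp grp true, g (mulVecE Wᵀ (F j)) 1| ≤
      L / 2 * opNorm W * (‖ν false - ν true‖ + 2 * D) :=
  stmt8_general grp N₀ N₁ hcard0 hcard1 hN₀ hN₁ F ν D hdev g L hL hLip W
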